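/- arXiv:2403.19703 — 2 statements merged into one kernel-verified Lean document; each statement's English description precedes it below -/
import Mathlib

section
/- (Fubini, version I) Let R ⊂ ℝⁿ and S ⊂ ℝᵐ be closed rectangles, and f : R × S → ℝ Riemann integrable. Define g(x) as the lower Darboux integral of y ↦ f(x,y) over S, and h(x) as the corresponding upper Darboux integral. Then g and h are Riemann integrable over R and ∫_R g = ∫_R h = ∫_{R×S} f. -/
/-!
Fix a partition `P` of `R × S` and a box `B` of its `R`-part. For `x ∈ B`, the boxes of `P` above
`B` contribute at most a lower sum of `f_x`, hence at most `g x`; summing over `B` gives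
`L(f, P) ≤ L(g, P_R)`. Applied to `-f` this gives `U(h, P_R) ≤ U(f, P)`. Since `g ≤ h`, the lower
and upper integrals of `g` and of `h` are squeezed between those of `f`, which coincide.

Lower sums never exceed upper sums because both can be written as sums over pairs of boxes
weighted by the volume of their intersection.
-/

/-- A partition of the interval `[a, b]`: finitely many points
`a = x₀ < x₁ < ⋯ < xₙ = b`. -/
structure Partition1 (a b : ℝ) where
  n : ℕ
  pts : Fin (n + 1) → ℝ
  mono : StrictMono pts
  first : pts 0 = a
  last : pts (Fin.last n) = b

/-- Lower Darboux sum `L(f, P) = Σ mᵢ Δxᵢ`. -/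
noncomputable def Partition1.lowerSum {a b : ℝ} (f : ℝ → ℝ) (P : Partition1 a b) : ℝ :=
  ∑ i : Fin P.n, sInf (f '' Set.Icc (P.pts i.castSucc) (P.pts i.succ)) *
    (P.pts i.succ - P.pts i.castSucc)

/-- Upper Darboux sum `U(f, P) = Σ Mᵢ Δxᵢ`. -/
noncomputable def Partition1.upperSum {a b : ℝ} (f : ℝ → ℝ) (P : Partition1 a b) : ℝ :=
  ∑ i : Fin P.n, sSup (f '' Set.Icc (P.pts i.castSucc) (P.pts i.succ)) *
    (P.pts i.succ - P.pts i.castSucc)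

/-- The closed rectangle `Π [lo i, hi i]` as a subset of `ι → ℝ`. -/
def Rect {ι : Type} (lo hi : ι → ℝ) : Set (ι → ℝ) :=
  {x | ∀ i, x i ∈ Set.Icc (lo i) (hi i)}

/-- The `n`-dimensional volume `Π (hi i - lo i)` of a rectangle. -/
def vol {ι : Type} [Fintype ι] (lo hi : ι → ℝ) : ℝ := ∏ i, (hi i - lo i)

/-- A partition of the rectangle `Π [lo i, hi i]`: a partition of each side. -/
def PartitionN {ι : Type} (lo hi : ι → ℝ) : Type :=
  ∀ i, Partition1 (lo i) (hi i)

/-- The lower-left corner of the subrectangle of `P` indexed by `J`. -/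
def subLo {ι : Type} {lo hi : ι → ℝ} (P : PartitionN lo hi)
    (J : ∀ i, Fin (P i).n) : ι → ℝ := fun i => (P i).pts (J i).castSucc

/-- The upper-right corner of the subrectangle of `P` indexed by `J`. -/
def subHi {ι : Type} {lo hi : ι → ℝ} (P : PartitionN lo hi)
    (J : ∀ i, Fin (P i).n) : ι → ℝ := fun i => (P i).pts (J i).succ

/-- The volume of the subrectangle of `P` indexed by `J`. -/
def subVol {ι : Type} [Fintype ι] {lo hi : ι → ℝ} (P : PartitionN lo hi)
    (J : ∀ i, Fin (P i).n) : ℝ :=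
  ∏ i, ((P i).pts (J i).succ - (P i).pts (J i).castSucc)

/-- Lower Darboux sum `L(P, f) = Σ mᵢ V(Rᵢ)` over the subrectangles of `P`. -/
noncomputable def lowerSumN {ι : Type} [Fintype ι] [DecidableEq ι] {lo hi : ι → ℝ}
    (f : (ι → ℝ) → ℝ) (P : PartitionN lo hi) : ℝ :=
  ∑ J : ∀ i, Fin (P i).n, sInf (f '' Rect (subLo P J) (subHi P J)) * subVol P J

/-- Upper Darboux sum `U(P, f) = Σ Mᵢ V(Rᵢ)` over the subrectangles of `P`. -/
noncomputable def upperSumN {ι : Type} [Fintype ι] [DecidableEq ι] {lo hi : ι → ℝ}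
    (f : (ι → ℝ) → ℝ) (P : PartitionN lo hi) : ℝ :=
  ∑ J : ∀ i, Fin (P i).n, sSup (f '' Rect (subLo P J) (subHi P J)) * subVol P J

/-- Lower Darboux integral: supremum of lower sums over all partitions. -/
noncomputable def lowerIntN {ι : Type} [Fintype ι] [DecidableEq ι]
    (lo hi : ι → ℝ) (f : (ι → ℝ) → ℝ) : ℝ :=
  sSup (Set.range fun P : PartitionN lo hi => lowerSumN f P)

/-- Upper Darboux integral: infimum of upper sums over all partitions. -/
noncomputable def upperIntN {ι : Type} [Fintype ι] [DecidableEq ι]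
    (lo hi : ι → ℝ) (f : (ι → ℝ) → ℝ) : ℝ :=
  sInf (Set.range fun P : PartitionN lo hi => upperSumN f P)

/-- `f` is Riemann integrable on the rectangle when the lower and upper
Darboux integrals agree. -/
def RiemannIntN {ι : Type} [Fintype ι] [DecidableEq ι]
    (lo hi : ι → ℝ) (f : (ι → ℝ) → ℝ) : Prop :=
  lowerIntN lo hi f = upperIntN lo hi f

/-- The Riemann integral of `f` over the rectangle (the common value of the
lower and upper Darboux integrals when `f` is integrable). -/
noncomputable def intN {ι : Type} [Fintype ι] [DecidableEq ι]
    (lo hi : ι → ℝ) (f : (ι → ℝ) → ℝ) : ℝ :=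
  upperIntN lo hi f

open Finset

theorem Fin.sum_univ_succ_sub_castSucc {M : Type*} [AddCommGroup M] {n : ℕ}
    (f : Fin (n + 1) → M) :
    ∑ i : Fin n, (f i.succ - f i.castSucc) = f (Fin.last n) - f 0 := by
  rw [sum_sub_distrib, eq_sub_of_add_eq' (Fin.sum_univ_succ f).symm,
    eq_sub_of_add_eq (Fin.sum_univ_castSucc f).symm]
  abel

/-- The length of `[c, d] ∩ [u, v]`. -/
def overlap (c d u v : ℝ) : ℝ := max 0 (min d v - max c u)

section Overlap

variable {c d u v : ℝ}

theorem overlap_nonneg : 0 ≤ overlap c d u v := le_max_left _ _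

theorem overlap_comm : overlap c d u v = overlap u v c d := by
  rw [overlap, overlap, min_comm d v, max_comm c u]

theorem overlap_eq_sub (hcd : c ≤ d) (huv : u ≤ v) :
    overlap c d u v = max c (min v d) - max c (min u d) := by
  simp only [overlap, max_def, min_def]
  split_ifs <;> linarith

theorem exists_mem_Icc_of_overlap_pos (h : 0 < overlap c d u v) :
    ∃ t, t ∈ Set.Icc c d ∧ t ∈ Set.Icc u v := by
  have h' : max c u ≤ min d v := by
    by_contra hlt
    simp [overlap, (sub_nonpos.2 (not_le.1 hlt).le)] at h
  exact ⟨max c u, ⟨le_max_left _ _, h'.trans (min_le_left _ _)⟩,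
    ⟨le_max_right _ _, h'.trans (min_le_right _ _)⟩⟩

end Overlap

namespace Partition1

variable {a b : ℝ}

theorem pts_mem (P : Partition1 a b) (k : Fin (P.n + 1)) : P.pts k ∈ Set.Icc a b :=
  ⟨P.first.symm.trans_le (P.mono.monotone (Fin.zero_le k)),
    (P.mono.monotone (Fin.le_last k)).trans_eq P.last⟩

theorem pts_castSucc_le_succ (P : Partition1 a b) (k : Fin P.n) :
    P.pts k.castSucc ≤ P.pts k.succ :=
  (P.mono (Fin.castSucc_lt_succ (i := k))).le

theorem nonempty_of_le (h : a ≤ b) : Nonempty (Partition1 a b) := by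
  rcases h.eq_or_lt with rfl | hlt
  · exact ⟨⟨0, fun _ => a, fun i j hij => absurd (Subsingleton.elim (α := Fin 1) i j) hij.ne, rfl, rfl⟩⟩
  · exact ⟨⟨1, ![a, b], Fin.strictMono_iff_lt_succ.2 fun i => by fin_cases i; simpa, rfl, rfl⟩⟩

theorem sum_sub (P : Partition1 a b) :
    ∑ k : Fin P.n, (P.pts k.succ - P.pts k.castSucc) = b - a := by
  rw [Fin.sum_univ_succ_sub_castSucc, P.last, P.first]

theorem sum_overlap (P : Partition1 a b) {c d : ℝ} (hac : a ≤ c) (hcd : c ≤ d) (hdb : d ≤ b) :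
    ∑ k : Fin P.n, overlap c d (P.pts k.castSucc) (P.pts k.succ) = d - c := by
  simp_rw [overlap_eq_sub hcd (P.pts_castSucc_le_succ _)]
  rw [Fin.sum_univ_succ_sub_castSucc (fun k => max c (min (P.pts k) d)), P.last, P.first,
    min_eq_right hdb, min_eq_left (hac.trans hcd), max_eq_right hcd, max_eq_left hac]

end Partition1

namespace PartitionN

variable {ι : Type} {lo hi : ι → ℝ}

theorem nonempty_of_le (h : ∀ i, lo i ≤ hi i) : Nonempty (PartitionN lo hi) :=
  ⟨fun i => (Partition1.nonempty_of_le (h i)).some⟩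

theorem subLo_le_subHi (P : PartitionN lo hi) (J : ∀ i, Fin (P i).n) (i : ι) :
    subLo P J i ≤ subHi P J i :=
  (P i).pts_castSucc_le_succ (J i)

theorem rect_sub_nonempty (P : PartitionN lo hi) (J : ∀ i, Fin (P i).n) :
    (Rect (subLo P J) (subHi P J)).Nonempty :=
  ⟨subLo P J, fun i => ⟨le_rfl, P.subLo_le_subHi J i⟩⟩

theorem rect_sub_subset (P : PartitionN lo hi) (J : ∀ i, Fin (P i).n) :
    Rect (subLo P J) (subHi P J) ⊆ Rect lo hi := fun _ hx i =>
  ⟨((P i).pts_mem _).1.trans (hx i).1, (hx i).2.trans ((P i).pts_mem _).2⟩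

variable [Fintype ι]

theorem subVol_nonneg (P : PartitionN lo hi) (J : ∀ i, Fin (P i).n) : 0 ≤ subVol P J :=
  prod_nonneg fun i _ => sub_nonneg.2 (P.subLo_le_subHi J i)

def overlapVol (P Q : PartitionN lo hi) (J : ∀ i, Fin (P i).n) (J' : ∀ i, Fin (Q i).n) : ℝ :=
  ∏ i, overlap (subLo P J i) (subHi P J i) (subLo Q J' i) (subHi Q J' i)

variable (P Q : PartitionN lo hi)

theorem overlapVol_nonneg (J : ∀ i, Fin (P i).n) (J' : ∀ i, Fin (Q i).n) :
    0 ≤ overlapVol P Q J J' :=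
  prod_nonneg fun _ _ => overlap_nonneg

theorem overlapVol_comm (J : ∀ i, Fin (P i).n) (J' : ∀ i, Fin (Q i).n) :
    overlapVol P Q J J' = overlapVol Q P J' J :=
  prod_congr rfl fun _ _ => overlap_comm

theorem nonempty_inter_of_overlapVol_pos {J : ∀ i, Fin (P i).n} {J' : ∀ i, Fin (Q i).n}
    (h : 0 < overlapVol P Q J J') :
    (Rect (subLo P J) (subHi P J) ∩ Rect (subLo Q J') (subHi Q J')).Nonempty := by
  have hpos : ∀ i, 0 < overlap (subLo P J i) (subHi P J i) (subLo Q J' i) (subHi Q J' i) := by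
    intro i
    refine overlap_nonneg.lt_of_ne fun h0 => h.ne' ?_
    exact prod_eq_zero (mem_univ i) h0.symm
  choose t ht using fun i => exists_mem_Icc_of_overlap_pos (hpos i)
  exact ⟨t, fun i => (ht i).1, fun i => (ht i).2⟩

variable [DecidableEq ι]

theorem sum_subVol (P : PartitionN lo hi) : ∑ J : ∀ i, Fin (P i).n, subVol P J = vol lo hi :=
  (Fintype.prod_sum (κ := fun i => Fin (P i).n) _).symm.trans
    (prod_congr rfl fun i _ => (P i).sum_sub)

theorem sum_overlapVol_right (J : ∀ i, Fin (P i).n) :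
    ∑ J' : ∀ i, Fin (Q i).n, overlapVol P Q J J' = subVol P J :=
  (Fintype.prod_sum (κ := fun i => Fin (Q i).n) _).symm.trans
    (prod_congr rfl fun i _ => (Q i).sum_overlap ((P i).pts_mem _).1
      (P.subLo_le_subHi J i) ((P i).pts_mem _).2)

theorem sum_overlapVol_left (J' : ∀ i, Fin (Q i).n) :
    ∑ J : ∀ i, Fin (P i).n, overlapVol P Q J J' = subVol Q J' := by
  simp_rw [overlapVol_comm P Q]
  exact sum_overlapVol_right Q P J'

end PartitionN

section Darboux

variable {ι : Type} {lo hi : ι → ℝ} {f : (ι → ℝ) → ℝ} {C : ℝ}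

theorem bddBelow_image_of_abs_le (hb : ∀ x ∈ Rect lo hi, |f x| ≤ C) {B : Set (ι → ℝ)}
    (hB : B ⊆ Rect lo hi) : BddBelow (f '' B) :=
  ⟨-C, Set.forall_mem_image.2 fun x hx => (abs_le.1 (hb x (hB hx))).1⟩

theorem bddAbove_image_of_abs_le (hb : ∀ x ∈ Rect lo hi, |f x| ≤ C) {B : Set (ι → ℝ)}
    (hB : B ⊆ Rect lo hi) : BddAbove (f '' B) :=
  ⟨C, Set.forall_mem_image.2 fun x hx => (abs_le.1 (hb x (hB hx))).2⟩

variable [Fintype ι] [DecidableEq ι]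

theorem lowerSumN_le_mul_vol (hb : ∀ x ∈ Rect lo hi, |f x| ≤ C) (P : PartitionN lo hi) :
    lowerSumN f P ≤ C * vol lo hi := by
  rw [← P.sum_subVol, mul_sum]
  refine sum_le_sum fun J _ => mul_le_mul_of_nonneg_right ?_ (P.subVol_nonneg J)
  obtain ⟨x, hx⟩ := P.rect_sub_nonempty J
  exact (csInf_le (bddBelow_image_of_abs_le hb (P.rect_sub_subset J)) ⟨x, hx, rfl⟩).trans
    (abs_le.1 (hb x (P.rect_sub_subset J hx))).2

theorem neg_mul_vol_le_lowerSumN (hb : ∀ x ∈ Rect lo hi, |f x| ≤ C) (P : PartitionN lo hi) :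
    -(C * vol lo hi) ≤ lowerSumN f P := by
  rw [← P.sum_subVol, mul_sum, ← sum_neg_distrib]
  refine sum_le_sum fun J _ => ?_
  rw [← neg_mul]
  refine mul_le_mul_of_nonneg_right ?_ (P.subVol_nonneg J)
  exact le_csInf ((P.rect_sub_nonempty J).image f)
    (Set.forall_mem_image.2 fun x hx => (abs_le.1 (hb x (P.rect_sub_subset J hx))).1)

theorem bddAbove_range_lowerSumN (hb : ∀ x ∈ Rect lo hi, |f x| ≤ C) :
    BddAbove (Set.range fun P : PartitionN lo hi => lowerSumN f P) :=
  ⟨C * vol lo hi, Set.forall_mem_range.2 (lowerSumN_le_mul_vol hb)⟩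

theorem abs_lowerIntN_le (hlo : ∀ i, lo i ≤ hi i) (hb : ∀ x ∈ Rect lo hi, |f x| ≤ C) :
    |lowerIntN lo hi f| ≤ C * vol lo hi := by
  have := PartitionN.nonempty_of_le hlo
  refine abs_le.2 ⟨(neg_mul_vol_le_lowerSumN hb (Classical.arbitrary _)).trans
    (le_csSup (bddAbove_range_lowerSumN hb) ⟨_, rfl⟩), ?_⟩
  exact csSup_le (Set.range_nonempty _) (Set.forall_mem_range.2 (lowerSumN_le_mul_vol hb))

/-- Boxes of positive overlap share a point, at which `f` lies between the two bounds. -/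
theorem lowerSumN_le_upperSumN (hb : ∀ x ∈ Rect lo hi, |f x| ≤ C) (P Q : PartitionN lo hi) :
    lowerSumN f P ≤ upperSumN f Q := by
  have key : ∀ J J', sInf (f '' Rect (subLo P J) (subHi P J)) * P.overlapVol Q J J' ≤
      sSup (f '' Rect (subLo Q J') (subHi Q J')) * P.overlapVol Q J J' := by
    intro J J'
    rcases (P.overlapVol_nonneg Q J J').eq_or_lt with h0 | hpos
    · rw [← h0, mul_zero, mul_zero]
    obtain ⟨x, hxP, hxQ⟩ := P.nonempty_inter_of_overlapVol_pos Q hpos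
    refine mul_le_mul_of_nonneg_right ?_ hpos.le
    exact (csInf_le (bddBelow_image_of_abs_le hb (P.rect_sub_subset J)) ⟨x, hxP, rfl⟩).trans
      (le_csSup (bddAbove_image_of_abs_le hb (Q.rect_sub_subset J')) ⟨x, hxQ, rfl⟩)
  calc lowerSumN f P
      = ∑ J, ∑ J', sInf (f '' Rect (subLo P J) (subHi P J)) * P.overlapVol Q J J' := by
        simp_rw [← mul_sum, P.sum_overlapVol_right Q]; rfl
    _ ≤ ∑ J, ∑ J', sSup (f '' Rect (subLo Q J') (subHi Q J')) * P.overlapVol Q J J' :=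
        sum_le_sum fun J _ => sum_le_sum fun J' _ => key J J'
    _ = upperSumN f Q := by
        rw [sum_comm]; simp_rw [← mul_sum, P.sum_overlapVol_left Q]; rfl

theorem lowerIntN_le_upperIntN (hlo : ∀ i, lo i ≤ hi i) (hb : ∀ x ∈ Rect lo hi, |f x| ≤ C) :
    lowerIntN lo hi f ≤ upperIntN lo hi f := by
  have := PartitionN.nonempty_of_le hlo
  exact csSup_le (Set.range_nonempty _) (Set.forall_mem_range.2 fun P =>
    le_csInf (Set.range_nonempty _) (Set.forall_mem_range.2 (lowerSumN_le_upperSumN hb P)))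

theorem lowerSumN_mono {f₁ f₂ : (ι → ℝ) → ℝ} {C₁ : ℝ} (hb₁ : ∀ x ∈ Rect lo hi, |f₁ x| ≤ C₁)
    (hle : ∀ x ∈ Rect lo hi, f₁ x ≤ f₂ x) (P : PartitionN lo hi) :
    lowerSumN f₁ P ≤ lowerSumN f₂ P := by
  refine sum_le_sum fun J _ => mul_le_mul_of_nonneg_right ?_ (P.subVol_nonneg J)
  refine le_csInf ((P.rect_sub_nonempty J).image _) (Set.forall_mem_image.2 fun x hx => ?_)
  exact (csInf_le (bddBelow_image_of_abs_le hb₁ (P.rect_sub_subset J)) ⟨x, hx, rfl⟩).trans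
    (hle x (P.rect_sub_subset J hx))

theorem lowerIntN_mono (hlo : ∀ i, lo i ≤ hi i) {f₁ f₂ : (ι → ℝ) → ℝ} {C₁ C₂ : ℝ}
    (hb₁ : ∀ x ∈ Rect lo hi, |f₁ x| ≤ C₁) (hb₂ : ∀ x ∈ Rect lo hi, |f₂ x| ≤ C₂)
    (hle : ∀ x ∈ Rect lo hi, f₁ x ≤ f₂ x) : lowerIntN lo hi f₁ ≤ lowerIntN lo hi f₂ := by
  have := PartitionN.nonempty_of_le hlo
  exact csSup_le (Set.range_nonempty _) (Set.forall_mem_range.2 fun P =>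
    (lowerSumN_mono hb₁ hle P).trans (le_csSup (bddAbove_range_lowerSumN hb₂) ⟨P, rfl⟩))

end Darboux

section Negation

variable {ι : Type} [Fintype ι] [DecidableEq ι] {lo hi : ι → ℝ}

theorem lowerSumN_neg (f : (ι → ℝ) → ℝ) (P : PartitionN lo hi) :
    lowerSumN (fun x => -f x) P = -upperSumN f P := by
  simp only [lowerSumN, upperSumN, ← sum_neg_distrib, ← neg_mul]
  refine sum_congr rfl fun J _ => ?_
  rw [← Real.sInf_neg, ← Set.image_neg_eq_neg, Set.image_image]

theorem upperIntN_eq_neg_lowerIntN_neg (f : (ι → ℝ) → ℝ) :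
    upperIntN lo hi f = -lowerIntN lo hi (fun x => -f x) := by
  rw [lowerIntN, ← Real.sInf_neg, ← Set.image_neg_eq_neg, ← Set.range_comp]
  simp only [Function.comp_def, lowerSumN_neg, neg_neg]
  rfl

theorem upperIntN_mono (hlo : ∀ i, lo i ≤ hi i) {f₁ f₂ : (ι → ℝ) → ℝ} {C₁ C₂ : ℝ}
    (hb₁ : ∀ x ∈ Rect lo hi, |f₁ x| ≤ C₁) (hb₂ : ∀ x ∈ Rect lo hi, |f₂ x| ≤ C₂)
    (hle : ∀ x ∈ Rect lo hi, f₁ x ≤ f₂ x) : upperIntN lo hi f₁ ≤ upperIntN lo hi f₂ := by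
  rw [upperIntN_eq_neg_lowerIntN_neg, upperIntN_eq_neg_lowerIntN_neg, neg_le_neg_iff]
  exact lowerIntN_mono hlo (C₁ := C₂) (C₂ := C₁) (by simpa using hb₂) (by simpa using hb₁)
    fun x hx => neg_le_neg (hle x hx)

end Negation

section Product

variable {κ₁ κ₂ : Type} {lo hi : κ₁ ⊕ κ₂ → ℝ}

theorem sum_elim_mem_rect {x : κ₁ → ℝ} {y : κ₂ → ℝ} (hx : x ∈ Rect (lo ∘ Sum.inl) (hi ∘ Sum.inl))
    (hy : y ∈ Rect (lo ∘ Sum.inr) (hi ∘ Sum.inr)) : Sum.elim x y ∈ Rect lo hi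
  | Sum.inl a => hx a
  | Sum.inr b => hy b

namespace PartitionN

def left (P : PartitionN lo hi) : PartitionN (lo ∘ Sum.inl) (hi ∘ Sum.inl) :=
  fun a => P (Sum.inl a)

def right (P : PartitionN lo hi) : PartitionN (lo ∘ Sum.inr) (hi ∘ Sum.inr) :=
  fun b => P (Sum.inr b)

/-- The box of `P` that is the product of the `J₁`-th box of `P.left` and the `J₂`-th box of
`P.right`. -/
def sumIndex (P : PartitionN lo hi) (J₁ : ∀ a, Fin (P.left a).n) (J₂ : ∀ b, Fin (P.right b).n) :
    ∀ i, Fin (P i).n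
  | Sum.inl a => J₁ a
  | Sum.inr b => J₂ b

variable [Fintype κ₁] [Fintype κ₂] (P : PartitionN lo hi)

theorem subVol_sumIndex (J₁ : ∀ a, Fin (P.left a).n) (J₂ : ∀ b, Fin (P.right b).n) :
    subVol P (P.sumIndex J₁ J₂) = subVol P.left J₁ * subVol P.right J₂ :=
  Fintype.prod_sum_type _

variable [DecidableEq κ₁] [DecidableEq κ₂]

theorem sum_eq_sum_sumIndex (F : (∀ i, Fin (P i).n) → ℝ) :
    ∑ J, F J = ∑ J₁, ∑ J₂, F (P.sumIndex J₁ J₂) := by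
  rw [← (Equiv.sumPiEquivProdPi fun i => Fin (P i).n).symm.sum_comp, Fintype.sum_prod_type]
  refine sum_congr rfl fun J₁ _ => sum_congr rfl fun J₂ _ => congrArg F (funext ?_)
  rintro (a | b) <;> rfl
end PartitionN

variable [Fintype κ₂] [DecidableEq κ₂] {f : (κ₁ ⊕ κ₂ → ℝ) → ℝ} {C : ℝ}

theorem abs_lowerIntN_section_le (hlo : ∀ i, lo i ≤ hi i) (hb : ∀ x ∈ Rect lo hi, |f x| ≤ C) :
    ∀ x ∈ Rect (lo ∘ Sum.inl) (hi ∘ Sum.inl),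
      |lowerIntN (lo ∘ Sum.inr) (hi ∘ Sum.inr) (fun y => f (Sum.elim x y))| ≤
        C * vol (lo ∘ Sum.inr) (hi ∘ Sum.inr) := fun _ hx =>
  abs_lowerIntN_le (fun b => hlo (Sum.inr b)) fun _ hy => hb _ (sum_elim_mem_rect hx hy)

variable [Fintype κ₁] [DecidableEq κ₁]

theorem lowerSumN_le_lowerSumN_lowerIntN (hb : ∀ x ∈ Rect lo hi, |f x| ≤ C)
    (P : PartitionN lo hi) :
    lowerSumN f P ≤ lowerSumN
      (fun x => lowerIntN (lo ∘ Sum.inr) (hi ∘ Sum.inr) (fun y => f (Sum.elim x y))) P.left := by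
  set g := fun x => lowerIntN (lo ∘ Sum.inr) (hi ∘ Sum.inr) (fun y => f (Sum.elim x y))
  have hcol : ∀ J₁, ∑ J₂, sInf (f '' Rect (subLo P (P.sumIndex J₁ J₂))
      (subHi P (P.sumIndex J₁ J₂))) * subVol P.right J₂ ≤
      sInf (g '' Rect (subLo P.left J₁) (subHi P.left J₁)) := by
    intro J₁
    refine le_csInf ((P.left.rect_sub_nonempty J₁).image g)
      (Set.forall_mem_image.2 fun x hx => ?_)
    have hbx : ∀ y ∈ Rect (lo ∘ Sum.inr) (hi ∘ Sum.inr), |f (Sum.elim x y)| ≤ C :=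
      fun y hy => hb _ (sum_elim_mem_rect (P.left.rect_sub_subset J₁ hx) hy)
    refine le_trans ?_ (le_csSup (bddAbove_range_lowerSumN hbx) ⟨P.right, rfl⟩)
    refine sum_le_sum fun J₂ _ => mul_le_mul_of_nonneg_right ?_ (P.right.subVol_nonneg J₂)
    refine csInf_le_csInf (bddBelow_image_of_abs_le hb (P.rect_sub_subset _))
      ((P.right.rect_sub_nonempty J₂).image _) ?_
    rintro _ ⟨y, hy, rfl⟩
    exact ⟨Sum.elim x y, sum_elim_mem_rect hx hy, rfl⟩
  calc lowerSumN f P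
      = ∑ J₁, (∑ J₂, sInf (f '' Rect (subLo P (P.sumIndex J₁ J₂))
          (subHi P (P.sumIndex J₁ J₂))) * subVol P.right J₂) * subVol P.left J₁ := by
        rw [lowerSumN, P.sum_eq_sum_sumIndex]
        simp_rw [sum_mul, P.subVol_sumIndex, mul_right_comm, mul_assoc]
    _ ≤ lowerSumN g P.left :=
        sum_le_sum fun J₁ _ => mul_le_mul_of_nonneg_right (hcol J₁) (P.left.subVol_nonneg J₁)

theorem lowerIntN_le_lowerIntN_lowerIntN (hlo : ∀ i, lo i ≤ hi i)
    (hb : ∀ x ∈ Rect lo hi, |f x| ≤ C) :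
    lowerIntN lo hi f ≤ lowerIntN (lo ∘ Sum.inl) (hi ∘ Sum.inl)
      (fun x => lowerIntN (lo ∘ Sum.inr) (hi ∘ Sum.inr) (fun y => f (Sum.elim x y))) := by
  have := PartitionN.nonempty_of_le hlo
  exact csSup_le (Set.range_nonempty _) (Set.forall_mem_range.2 fun P =>
    (lowerSumN_le_lowerSumN_lowerIntN hb P).trans
      (le_csSup (bddAbove_range_lowerSumN (abs_lowerIntN_section_le hlo hb)) ⟨P.left, rfl⟩))

theorem upperIntN_upperIntN_le_upperIntN (hlo : ∀ i, lo i ≤ hi i)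
    (hb : ∀ x ∈ Rect lo hi, |f x| ≤ C) :
    upperIntN (lo ∘ Sum.inl) (hi ∘ Sum.inl)
      (fun x => upperIntN (lo ∘ Sum.inr) (hi ∘ Sum.inr) (fun y => f (Sum.elim x y))) ≤
      upperIntN lo hi f := by
  simp only [upperIntN_eq_neg_lowerIntN_neg, neg_neg, neg_le_neg_iff]
  exact lowerIntN_le_lowerIntN_lowerIntN hlo (f := fun x => -f x) (by simpa using hb)

end Product

theorem riemannIntN_of_lowerIntN_le_of_upperIntN_le {ι ι' : Type} [Fintype ι] [DecidableEq ι]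
    [Fintype ι'] [DecidableEq ι'] {lo hi : ι → ℝ} {lo' hi' : ι' → ℝ} {f : (ι → ℝ) → ℝ}
    {g : (ι' → ℝ) → ℝ} (hf : RiemannIntN lo hi f)
    (hlow : lowerIntN lo hi f ≤ lowerIntN lo' hi' g)
    (hup : upperIntN lo' hi' g ≤ upperIntN lo hi f)
    (hg : lowerIntN lo' hi' g ≤ upperIntN lo' hi' g) :
    RiemannIntN lo' hi' g ∧ intN lo' hi' g = intN lo hi f := by
  unfold RiemannIntN intN at *
  constructor <;> linarith

/-- Fubini, version I: if `f` is Riemann integrable on `R × S`, then the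
functions `g(x) = (lower integral of f_x over S)` and
`h(x) = (upper integral of f_x over S)` are Riemann integrable on `R` and
`∫_R g = ∫_R h = ∫_{R×S} f`. -/
theorem fubini_I (n m : ℕ) (lo hi : Fin n ⊕ Fin m → ℝ)
    (hlo : ∀ i, lo i ≤ hi i) (f : (Fin n ⊕ Fin m → ℝ) → ℝ)
    (hb : ∃ C, ∀ x ∈ Rect lo hi, |f x| ≤ C)
    (hf : RiemannIntN lo hi f)
    (g h : (Fin n → ℝ) → ℝ)
    (hg : g = fun x => lowerIntN (lo ∘ Sum.inr) (hi ∘ Sum.inr)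
      (fun y => f (Sum.elim x y)))
    (hh : h = fun x => upperIntN (lo ∘ Sum.inr) (hi ∘ Sum.inr)
      (fun y => f (Sum.elim x y))) :
    RiemannIntN (lo ∘ Sum.inl) (hi ∘ Sum.inl) g ∧
    RiemannIntN (lo ∘ Sum.inl) (hi ∘ Sum.inl) h ∧
    intN (lo ∘ Sum.inl) (hi ∘ Sum.inl) g = intN lo hi f ∧
    intN (lo ∘ Sum.inl) (hi ∘ Sum.inl) h = intN lo hi f := by
  obtain ⟨C, hC⟩ := hb
  subst hg hh
  have hloR : ∀ a, (lo ∘ Sum.inl) a ≤ (hi ∘ Sum.inl) a := fun a => hlo (Sum.inl a)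
  have hloS : ∀ b, (lo ∘ Sum.inr) b ≤ (hi ∘ Sum.inr) b := fun b => hlo (Sum.inr b)
  have hbg := abs_lowerIntN_section_le hlo hC
  have hbh : ∀ x ∈ Rect (lo ∘ Sum.inl) (hi ∘ Sum.inl),
      |upperIntN (lo ∘ Sum.inr) (hi ∘ Sum.inr) (fun y => f (Sum.elim x y))| ≤
        C * vol (lo ∘ Sum.inr) (hi ∘ Sum.inr) := fun x hx => by
    simpa [upperIntN_eq_neg_lowerIntN_neg] using
      abs_lowerIntN_section_le (f := fun x => -f x) hlo (by simpa using hC) x hx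
  have hgh : ∀ x ∈ Rect (lo ∘ Sum.inl) (hi ∘ Sum.inl),
      lowerIntN (lo ∘ Sum.inr) (hi ∘ Sum.inr) (fun y => f (Sum.elim x y)) ≤
        upperIntN (lo ∘ Sum.inr) (hi ∘ Sum.inr) (fun y => f (Sum.elim x y)) :=
    fun x hx => lowerIntN_le_upperIntN hloS fun y hy => hC _ (sum_elim_mem_rect hx hy)
  have hlow_g := lowerIntN_le_lowerIntN_lowerIntN hlo hC
  have hup_h := upperIntN_upperIntN_le_upperIntN hlo hC
  obtain ⟨hg_int, hg_eq⟩ := riemannIntN_of_lowerIntN_le_of_upperIntN_le hf hlow_g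
    ((upperIntN_mono hloR hbg hbh hgh).trans hup_h) (lowerIntN_le_upperIntN hloR hbg)
  obtain ⟨hh_int, hh_eq⟩ := riemannIntN_of_lowerIntN_le_of_upperIntN_le hf
    (hlow_g.trans (lowerIntN_mono hloR hbg hbh hgh)) hup_h (lowerIntN_le_upperIntN hloR hbh)
  exact ⟨hg_int, hh_int, hg_eq, hh_eq⟩
end

section
/- (Bronstein integral) For positive reals a, b, ∫₀^π log(a² + b² − 2ab·cos x) dx = 2π·log(max{a,b}). -/
/-!
Write `a² + b² − 2ab cos θ = ‖b e^{iθ} − a‖²`. The integral over a full period is then `4π` times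
the circle average of `log ‖z − a‖` over the circle of radius `b`, which is `log b + log⁺ (a / b)`
(harmonicity of `log ‖z − a‖` when `a < b`, Jensen's formula in general). Since the integrand is
symmetric under `θ ↦ 2π − θ`, the integral over `[0, π]` is half of it.
-/

open Real MeasureTheory

theorem intervalIntegral.integral_zero_two_mul_eq_two_smul_of_reflect {E : Type*} [NormedAddCommGroup E]
    [NormedSpace ℝ E] {f : ℝ → E} {T : ℝ} (hf : IntervalIntegrable f volume 0 (2 * T))
    (hsymm : ∀ x, f (2 * T - x) = f x) :
    ∫ x in 0..2 * T, f x = (2 : ℝ) • ∫ x in 0..T, f x := by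
  have hT : T ∈ Set.uIcc 0 (2 * T) := by
    rcases le_total 0 T with h | h
    · exact Set.mem_uIcc.2 (Or.inl ⟨h, by linarith⟩)
    · exact Set.mem_uIcc.2 (Or.inr ⟨by linarith, h⟩)
  have hupper : ∫ x in T..2 * T, f x = ∫ x in 0..T, f x := by
    have := intervalIntegral.integral_comp_sub_left (a := 0) (b := T) f (2 * T)
    rw [sub_zero, show 2 * T - T = T by ring] at this
    simp only [hsymm] at this
    exact this.symm
  rw [← intervalIntegral.integral_add_adjacent_intervals
      (hf.mono_set (Set.uIcc_subset_uIcc Set.left_mem_uIcc hT))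
      (hf.mono_set (Set.uIcc_subset_uIcc hT Set.right_mem_uIcc)),
    hupper, two_smul]

theorem Real.log_add_posLog_inv_mul {a b : ℝ} (ha : 0 < a) (hb : 0 < b) :
    log b + log⁺ (b⁻¹ * a) = log (max a b) := by
  show log b + max 0 (log (b⁻¹ * a)) = _
  rw [log_mul (inv_ne_zero hb.ne') ha.ne', log_inv, ← max_add_add_left, add_zero,
    add_neg_cancel_left, max_comm, (strictMonoOn_log.monotoneOn).map_max ha hb]

theorem norm_circleMap_zero_sub_ofReal_sq (a b θ : ℝ) :
    ‖circleMap 0 b θ - a‖ ^ 2 = a ^ 2 + b ^ 2 - 2 * a * b * cos θ := by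
  rw [Complex.sq_norm, Complex.normSq_apply]
  simp only [circleMap_zero, Complex.exp_mul_I, ← Complex.ofReal_cos, ← Complex.ofReal_sin,
    Complex.sub_re, Complex.sub_im, Complex.add_re, Complex.add_im, Complex.mul_re, Complex.mul_im,
    Complex.ofReal_re, Complex.ofReal_im, Complex.I_re, Complex.I_im, mul_zero, mul_one, zero_mul,
    sub_self, sub_zero, add_zero, zero_add]
  nlinarith [sin_sq_add_cos_sq θ]

theorem log_sq_sub_two_mul_cos_eq (a b θ : ℝ) :
    log (a ^ 2 + b ^ 2 - 2 * a * b * cos θ) = 2 * log ‖circleMap 0 b θ - a‖ := by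
  rw [← norm_circleMap_zero_sub_ofReal_sq, log_pow, Nat.cast_ofNat]

theorem intervalIntegrable_log_sq_sub_two_mul_cos (a b : ℝ) :
    IntervalIntegrable (fun θ ↦ log (a ^ 2 + b ^ 2 - 2 * a * b * cos θ)) volume 0 (2 * π) := by
  simp_rw [log_sq_sub_two_mul_cos_eq]
  exact (circleIntegrable_log_norm_sub_const (a := (a : ℂ)) (c := 0) b).const_mul 2

theorem integral_zero_two_pi_log_sq_sub_two_mul_cos {a b : ℝ} (ha : 0 < a) (hb : 0 < b) :
    ∫ θ in 0..2 * π, log (a ^ 2 + b ^ 2 - 2 * a * b * cos θ) = 4 * π * log (max a b) := by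
  have havg := circleAverage_log_norm_sub_const_eq_log_radius_add_posLog
    (a := (a : ℂ)) (c := 0) hb.ne'
  rw [circleAverage_def, zero_sub, norm_neg, Complex.norm_real, Real.norm_of_nonneg ha.le,
    log_add_posLog_inv_mul ha hb, smul_eq_mul] at havg
  simp_rw [log_sq_sub_two_mul_cos_eq, intervalIntegral.integral_const_mul]
  rw [← havg]
  field_simp
  ring

open Real in
/-- Bronstein integral: for positive reals `a, b`,
`∫₀^π log(a² + b² − 2ab cos x) dx = 2π log(max{a,b})`. -/
theorem bronstein_integral (a b : ℝ) (ha : 0 < a) (hb : 0 < b) :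
    ∫ x in (0 : ℝ)..π, Real.log (a ^ 2 + b ^ 2 - 2 * a * b * Real.cos x) =
      2 * π * Real.log (max a b) := by
  have hhalf := intervalIntegral.integral_zero_two_mul_eq_two_smul_of_reflect
    (intervalIntegrable_log_sq_sub_two_mul_cos a b) (fun x ↦ by rw [cos_two_pi_sub])
  rw [integral_zero_two_pi_log_sq_sub_two_mul_cos ha hb, smul_eq_mul] at hhalf
  linarith
end
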